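/- Let b, μ, λ, a₀ ∈ ℝ with Δ := λ² - 4μ > 0, and define c = -a₀ - 8bμ - bλ² and u(x,t) = a₀ + 12bμ + 3bΔ sech²((√Δ/2)(x + ct)). Then u satisfies the KdV equation u_t + u u_x + b u_{xxx} = 0. -/

import Mathlib

/-!
`u` is a travelling wave `φ (x + c t)`, so the KdV equation reduces to the ODE
`c φ' + φ φ' + b φ''' = 0`. For `s = sech²` one has `s'' = 4 s - 6 s²` (from `s' = -2 s tanh`,
`tanh' = s`, `tanh² = 1 - s`), hence `s''' = (4 - 12 s) s'`. For `φ ξ = A + B s (k ξ)` the ODE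
becomes `B k s' (k ξ) ((c + A + 4 b k²) + (B - 12 b k²) s (k ξ)) = 0`, which holds for
`B = 12 b k²`, `c = -A - 4 b k²`; with `k² = (λ² - 4μ)/4` these are the given amplitude and speed.
-/

open Real

noncomputable def sechSq (y : ℝ) : ℝ := (1 / cosh y) ^ 2

lemma tanh_sq_eq_one_sub_sechSq (y : ℝ) : tanh y ^ 2 = 1 - sechSq y := by
  have := (cosh_pos y).ne'
  rw [tanh_eq_sinh_div_cosh, sechSq, div_pow, sinh_sq]
  field_simp

lemma hasDerivAt_tanh (y : ℝ) : HasDerivAt tanh (sechSq y) y := by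
  have := (cosh_pos y).ne'
  have h : HasDerivAt (fun y => sinh y / cosh y) _ y :=
    (hasDerivAt_sinh y).div (hasDerivAt_cosh y) this
  rw [show tanh = fun y => sinh y / cosh y from funext tanh_eq_sinh_div_cosh]
  convert h using 1
  rw [sechSq]
  field_simp
  exact (cosh_sq_sub_sinh_sq y).symm

lemma hasDerivAt_sechSq (y : ℝ) : HasDerivAt sechSq (-2 * sechSq y * tanh y) y := by
  have := (cosh_pos y).ne'
  have h : HasDerivAt (fun y => (1 / cosh y) ^ 2) _ y :=
    ((hasDerivAt_const y (1 : ℝ)).div (hasDerivAt_cosh y) this).pow 2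
  refine h.congr_deriv ?_
  simp only [sechSq, tanh_eq_sinh_div_cosh, Pi.div_apply]
  norm_num
  field_simp

lemma deriv_sechSq : deriv sechSq = fun y => -2 * sechSq y * tanh y :=
  funext fun y => (hasDerivAt_sechSq y).deriv

lemma deriv_deriv_sechSq : deriv (deriv sechSq) = fun y => 4 * sechSq y - 6 * sechSq y ^ 2 := by
  funext y
  have h : HasDerivAt (fun y => -2 * sechSq y * tanh y) _ y :=
    ((hasDerivAt_sechSq y).const_mul (-2)).mul (hasDerivAt_tanh y)
  rw [deriv_sechSq, h.deriv]
  linear_combination (4 * sechSq y) * tanh_sq_eq_one_sub_sechSq y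

lemma deriv_deriv_deriv_sechSq :
    deriv (deriv (deriv sechSq)) = fun y => (4 - 12 * sechSq y) * deriv sechSq y := by
  funext y
  have h : HasDerivAt (fun y => 4 * sechSq y - 6 * sechSq y ^ 2) _ y :=
    ((hasDerivAt_sechSq y).const_mul 4).sub (((hasDerivAt_sechSq y).pow 2).const_mul 6)
  rw [deriv_deriv_sechSq, h.deriv, deriv_sechSq]
  ring

lemma deriv_mul_comp_mul (f : ℝ → ℝ) (B k : ℝ) :
    deriv (fun ξ => B * f (k * ξ)) = fun ξ => B * k * deriv f (k * ξ) := by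
  funext ξ
  rw [deriv_const_mul_field']
  show B * deriv (fun ξ => f (k * ξ)) ξ = _
  rw [deriv_comp_mul_left (f := f), smul_eq_mul, mul_assoc]

/-- No smoothness of `φ` is needed: `deriv` commutes with translations and dilations of the
variable also where `φ` is not differentiable (both sides are then `0`). -/
lemma kdv_of_travelingWave (φ : ℝ → ℝ) (b c x t : ℝ) :
    deriv (fun s => φ (x + c * s)) t + φ (x + c * t) * deriv (fun y => φ (y + c * t)) x +
        b * deriv (fun y => deriv (fun z => deriv (fun w => φ (w + c * t)) z) y) x =
      c * deriv φ (x + c * t) + φ (x + c * t) * deriv φ (x + c * t) +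
        b * deriv (deriv (deriv φ)) (x + c * t) := by
  have h_time : deriv (fun s => φ (x + c * s)) t = c * deriv φ (x + c * t) := by
    rw [deriv_comp_mul_left (f := fun y => φ (x + y)), deriv_comp_const_add, smul_eq_mul]
  have h_space (ψ : ℝ → ℝ) : deriv (fun y => ψ (y + c * t)) = fun y => deriv ψ (y + c * t) :=
    funext fun y => deriv_comp_add_const ψ (c * t) y
  rw [h_time, h_space, h_space, h_space]

noncomputable def sechSqWave (A B k ξ : ℝ) : ℝ := A + B * sechSq (k * ξ)

lemma kdv_sechSqWave (A b k c ξ : ℝ) (hc : c = -A - 4 * b * k ^ 2) :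
    let φ := sechSqWave A (12 * b * k ^ 2) k
    c * deriv φ ξ + φ ξ * deriv φ ξ + b * deriv (deriv (deriv φ)) ξ = 0 := by
  intro φ
  have h1 : deriv φ = fun ξ => 12 * b * k ^ 2 * k * deriv sechSq (k * ξ) := by
    rw [show φ = fun ξ => A + 12 * b * k ^ 2 * sechSq (k * ξ) from rfl, deriv_const_add',
      deriv_mul_comp_mul]
  have h3 : deriv (deriv (deriv φ)) =
      fun ξ => 12 * b * k ^ 2 * k * k * k * deriv (deriv (deriv sechSq)) (k * ξ) := by
    rw [h1, deriv_mul_comp_mul, deriv_mul_comp_mul]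
  rw [h3, h1, deriv_deriv_deriv_sechSq, hc]
  simp only [φ, sechSqWave]
  ring

theorem stmt8 (b mu lam a0 c : ℝ) (hd : lam ^ 2 - 4 * mu > 0)
    (hc : c = -a0 - 8 * b * mu - b * lam ^ 2)
    (u : ℝ → ℝ → ℝ)
    (hu : ∀ x t : ℝ, u x t = a0 + 12 * b * mu +
      3 * b * (lam ^ 2 - 4 * mu) *
        (1 / Real.cosh (Real.sqrt (lam ^ 2 - 4 * mu) / 2 * (x + c * t))) ^ 2) :
    ∀ x t : ℝ,
      deriv (fun s => u x s) t + u x t * deriv (fun y => u y t) x +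
        b * deriv (fun y => deriv (fun z => deriv (fun w => u w t) z) y) x = 0 := by
  intro x t
  set k := √(lam ^ 2 - 4 * mu) / 2
  have hk : k ^ 2 = (lam ^ 2 - 4 * mu) / 4 := by
    rw [div_pow, sq_sqrt hd.le]
    norm_num
  have hu_wave : u = fun x t => sechSqWave (a0 + 12 * b * mu) (12 * b * k ^ 2) k (x + c * t) := by
    funext x t
    rw [hu, sechSqWave, sechSq, hk]
    ring
  subst hu_wave
  rw [kdv_of_travelingWave]
  exact kdv_sechSqWave _ _ _ _ _ (by rw [hc, hk]; ring)
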